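/- arXiv:1407.5232 — 4 statements merged into one kernel-verified Lean document; each statement's English description precedes it below -/
import Mathlib

section
/- For every p ≥ 0, ρ > 0 and positive integer n, ∑_{i ≤ ρn} i^{2p} ≤ (ρ+1)^{2p+1} ∑_{i=1}^n i^{2p}, where the left sum is over positive integers i with i ≤ ρn. -/
/-!
Compare both power sums with the integral of `x ^ r`, `r = 2p`, which is monotone on `[0, ∞)`:
`∑_{i ≤ m} i ^ r ≤ ∫₁^{m+1} x ^ r ≤ (m+1) ^ (r+1) / (r+1)` and `n ^ (r+1) / (r+1) ≤ ∑_{i ≤ n} i ^ r`.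
With `m = ⌊ρn⌋` we have `m + 1 ≤ ρn + n = (ρ+1) n`, and the factor `(ρ+1) ^ (r+1)` appears.
-/

open Finset

namespace Real

variable {r : ℝ}

theorem monotoneOn_rpow_Icc_natCast (hr : 0 ≤ r) (a b : ℕ) :
    MonotoneOn (fun x : ℝ ↦ x ^ r) (Set.Icc a b) :=
  (monotoneOn_rpow_Ici_of_exponent_nonneg hr).mono fun _ hx ↦ a.cast_nonneg.trans hx.1

theorem sum_Icc_rpow_le_rpow_div (hr : 0 ≤ r) (m : ℕ) :
    ∑ i ∈ Icc 1 m, (i : ℝ) ^ r ≤ ((m : ℝ) + 1) ^ (r + 1) / (r + 1) := by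
  have hsum := (monotoneOn_rpow_Icc_natCast hr 1 (m + 1)).sum_le_integral_Ico (by omega)
  rw [Ico_add_one_right_eq_Icc, integral_rpow (.inl (by linarith))] at hsum
  refine hsum.trans ?_
  push_cast
  rw [one_rpow]
  gcongr
  linarith

theorem rpow_div_le_sum_Icc_rpow (hr : 0 ≤ r) (n : ℕ) :
    (n : ℝ) ^ (r + 1) / (r + 1) ≤ ∑ i ∈ Icc 1 n, (i : ℝ) ^ r := by
  have hsum := (monotoneOn_rpow_Icc_natCast hr 0 n).integral_le_sum_Ico n.zero_le
  rw [integral_rpow (.inl (by linarith)), Nat.cast_zero, zero_rpow (by linarith), sub_zero] at hsum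
  rwa [sum_Ico_add' (fun i : ℕ ↦ (i : ℝ) ^ r), Ico_add_one_right_eq_Icc] at hsum

end Real

theorem Nat.floor_mul_add_one_le {ρ : ℝ} (hρ : 0 ≤ ρ) {n : ℕ} (hn : 1 ≤ n) :
    (⌊ρ * n⌋₊ : ℝ) + 1 ≤ (ρ + 1) * n := by
  have hfloor := Nat.floor_le (mul_nonneg hρ n.cast_nonneg)
  have hn' : (1 : ℝ) ≤ n := by exact_mod_cast hn
  linarith

theorem sum_rpow_scaled_range_general (p ρ : ℝ) (hp : 0 ≤ p) (hρ : 0 < ρ) (n : ℕ) :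
    ∑ i ∈ Finset.Icc 1 ⌊ρ * (n : ℝ)⌋₊, (i : ℝ) ^ (2 * p) ≤
      (ρ + 1) ^ (2 * p + 1) * ∑ i ∈ Finset.Icc 1 n, (i : ℝ) ^ (2 * p) := by
  obtain rfl | hn := n.eq_zero_or_pos
  · simp
  have hr : 0 ≤ 2 * p := by positivity
  calc ∑ i ∈ Icc 1 ⌊ρ * (n : ℝ)⌋₊, (i : ℝ) ^ (2 * p)
      ≤ ((⌊ρ * (n : ℝ)⌋₊ : ℝ) + 1) ^ (2 * p + 1) / (2 * p + 1) :=
        Real.sum_Icc_rpow_le_rpow_div hr _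
    _ ≤ ((ρ + 1) * n) ^ (2 * p + 1) / (2 * p + 1) := by
        gcongr
        exact Nat.floor_mul_add_one_le hρ.le hn
    _ = (ρ + 1) ^ (2 * p + 1) * ((n : ℝ) ^ (2 * p + 1) / (2 * p + 1)) := by
        rw [Real.mul_rpow (by positivity) n.cast_nonneg, mul_div_assoc]
    _ ≤ (ρ + 1) ^ (2 * p + 1) * ∑ i ∈ Icc 1 n, (i : ℝ) ^ (2 * p) := by
        gcongr
        exact Real.rpow_div_le_sum_Icc_rpow hr n

/-- For `p ≥ 0`, `ρ > 0` and a positive integer `n`,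
`∑_{i ≤ ρn} i^(2p) ≤ (ρ+1)^(2p+1) ∑_{i=1}^n i^(2p)`. -/
theorem sum_rpow_scaled_range (p ρ : ℝ) (hp : 0 ≤ p) (hρ : 0 < ρ) (n : ℕ) (hn : 1 ≤ n) :
    ∑ i ∈ Finset.Icc 1 ⌊ρ * (n : ℝ)⌋₊, (i : ℝ) ^ (2 * p) ≤
      (ρ + 1) ^ (2 * p + 1) * ∑ i ∈ Finset.Icc 1 n, (i : ℝ) ^ (2 * p) :=
  sum_rpow_scaled_range_general p ρ hp hρ n
end

section
/- For p ≥ 0 and any τ ≥ 2^{1+1/(2p+1)}, for all integers m ≥ τ one has ∑_{i=1}^{⌊m/τ⌋} i^{2p} ≤ (1/2) ∑_{i=1}^m i^{2p}. -/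
/-!
Write `q = 2p` and `k = ⌊m/τ⌋`. Bounding every term by the largest one gives
`∑_{i ≤ k} i^q ≤ k^(q+1)`, while the upper half of the range alone gives
`∑_{i ≤ m} i^q ≥ (m/2)^(q+1)`. The threshold on `τ` is exactly what makes
`(m/τ)^(q+1) ≤ (m / 2^(1+1/(q+1)))^(q+1) = (m/2)^(q+1) / 2`.
-/

open Finset

lemma sum_Icc_rpow_le_rpow_add_one {q : ℝ} (hq : 0 ≤ q) (k : ℕ) :
    ∑ i ∈ Icc 1 k, (i : ℝ) ^ q ≤ (k : ℝ) ^ (q + 1) :=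
  calc ∑ i ∈ Icc 1 k, (i : ℝ) ^ q
      ≤ ∑ _i ∈ Icc 1 k, (k : ℝ) ^ q :=
        sum_le_sum fun i hi =>
          Real.rpow_le_rpow i.cast_nonneg (mod_cast (mem_Icc.mp hi).2) hq
    _ = (k : ℝ) ^ (q + 1) := by
        rw [sum_const, Nat.card_Icc, nsmul_eq_mul, Nat.add_sub_cancel,
          Real.rpow_add_one' k.cast_nonneg (by linarith)]
        ring

lemma half_rpow_add_one_le_sum_Icc_rpow {q : ℝ} (hq : 0 ≤ q) (m : ℕ) :
    ((m : ℝ) / 2) ^ (q + 1) ≤ ∑ i ∈ Icc 1 m, (i : ℝ) ^ q := by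
  have hhalf : (m : ℝ) / 2 ≤ ((m - m / 2 : ℕ) : ℝ) := by
    rw [Nat.cast_sub (Nat.div_le_self m 2)]
    linarith [(Nat.cast_div_le : ((m / 2 : ℕ) : ℝ) ≤ m / 2)]
  have hterm : ∀ i ∈ Ioc (m / 2) m, ((m : ℝ) / 2) ^ q ≤ (i : ℝ) ^ q := fun i hi =>
    Real.rpow_le_rpow (by positivity) (hhalf.trans (mod_cast by grind)) hq
  calc ((m : ℝ) / 2) ^ (q + 1) = (m : ℝ) / 2 * ((m : ℝ) / 2) ^ q := by
        rw [Real.rpow_add_one' (by positivity) (by linarith), mul_comm]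
    _ ≤ (#(Ioc (m / 2) m) : ℝ) * ((m : ℝ) / 2) ^ q := by
        rw [Nat.card_Ioc]
        gcongr
    _ ≤ ∑ i ∈ Ioc (m / 2) m, (i : ℝ) ^ q := by
        simpa only [nsmul_eq_mul] using card_nsmul_le_sum _ _ _ hterm
    _ ≤ ∑ i ∈ Icc 1 m, (i : ℝ) ^ q :=
        sum_le_sum_of_subset_of_nonneg (fun i hi => by grind)
          fun i _ _ => Real.rpow_nonneg i.cast_nonneg q

lemma div_two_rpow_one_add_one_div_rpow {x s : ℝ} (hx : 0 ≤ x) (hs : 0 < s) :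
    (x / 2 ^ (1 + 1 / s)) ^ s = (x / 2) ^ s / 2 := by
  rw [Real.rpow_add two_pos, Real.rpow_one, ← div_div,
    Real.div_rpow (by positivity) (by positivity), ← Real.rpow_mul zero_le_two,
    one_div_mul_cancel hs.ne', Real.rpow_one]

theorem sum_rpow_floor_div_le_half_general (p τ : ℝ) (hp : 0 ≤ p)
    (hτ : (2 : ℝ) ^ (1 + 1 / (2 * p + 1)) ≤ τ) (m : ℕ) :
    ∑ i ∈ Finset.Icc 1 ⌊(m : ℝ) / τ⌋₊, (i : ℝ) ^ (2 * p) ≤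
      (1 / 2) * ∑ i ∈ Finset.Icc 1 m, (i : ℝ) ^ (2 * p) := by
  have hq : 0 ≤ 2 * p := by positivity
  have hthreshold : (0 : ℝ) < 2 ^ (1 + 1 / (2 * p + 1)) := by positivity
  have hfloor : (⌊(m : ℝ) / τ⌋₊ : ℝ) ≤ m / 2 ^ (1 + 1 / (2 * p + 1)) :=
    (Nat.floor_le (div_nonneg m.cast_nonneg (hthreshold.le.trans hτ))).trans
      (div_le_div_of_nonneg_left m.cast_nonneg hthreshold hτ)
  calc ∑ i ∈ Icc 1 ⌊(m : ℝ) / τ⌋₊, (i : ℝ) ^ (2 * p)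
      ≤ (⌊(m : ℝ) / τ⌋₊ : ℝ) ^ (2 * p + 1) := sum_Icc_rpow_le_rpow_add_one hq _
    _ ≤ ((m : ℝ) / 2 ^ (1 + 1 / (2 * p + 1))) ^ (2 * p + 1) :=
        Real.rpow_le_rpow (Nat.cast_nonneg _) hfloor (by positivity)
    _ = ((m : ℝ) / 2) ^ (2 * p + 1) / 2 :=
        div_two_rpow_one_add_one_div_rpow m.cast_nonneg (by positivity)
    _ ≤ (1 / 2) * ∑ i ∈ Icc 1 m, (i : ℝ) ^ (2 * p) := by
        linarith [half_rpow_add_one_le_sum_Icc_rpow hq m]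

/-- For `p ≥ 0` and `τ ≥ 2^(1+1/(2p+1))`, for all integers `m ≥ τ`:
`∑_{i=1}^{⌊m/τ⌋} i^(2p) ≤ (1/2) ∑_{i=1}^m i^(2p)`. -/
theorem sum_rpow_floor_div_le_half (p τ : ℝ) (hp : 0 ≤ p)
    (hτ : (2 : ℝ) ^ (1 + 1 / (2 * p + 1)) ≤ τ) (m : ℕ) (hm : τ ≤ (m : ℝ)) :
    ∑ i ∈ Finset.Icc 1 ⌊(m : ℝ) / τ⌋₊, (i : ℝ) ^ (2 * p) ≤
      (1 / 2) * ∑ i ∈ Finset.Icc 1 m, (i : ℝ) ^ (2 * p) :=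
  sum_rpow_floor_div_le_half_general p τ hp hτ m
end

section
/- For p ≥ 0, τ₀ ≥ 1, and all integers l ≥ τ₀, l·⌊l/τ₀⌋^{2p} ≥ (2τ₀)^{-2p} ∑_{i=⌊l/τ₀⌋+1}^{l} i^{2p}. -/
open Finset

/-- If `τ ≤ x` then `⌊x / τ⌋₊ ≥ 1`, so the rounding loss `x / τ - ⌊x / τ⌋₊ < 1` is at most
`⌊x / τ⌋₊`. -/
theorem div_two_mul_le_floor_div {x τ : ℝ} (hτ : 0 < τ) (hx : τ ≤ x) :
    x / (2 * τ) ≤ ⌊x / τ⌋₊ := by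
  have hone : (1 : ℝ) ≤ ⌊x / τ⌋₊ := by
    exact_mod_cast Nat.le_floor (by rwa [Nat.cast_one, one_le_div hτ])
  have hlt : x / τ < ⌊x / τ⌋₊ + 1 := Nat.lt_floor_add_one _
  rw [div_le_iff₀ (by positivity)]
  rw [div_lt_iff₀ hτ] at hlt
  nlinarith

theorem sum_Icc_succ_rpow_le {q : ℝ} (hq : 0 ≤ q) (m l : ℕ) :
    ∑ i ∈ Icc (m + 1) l, (i : ℝ) ^ q ≤ l * (l : ℝ) ^ q := by
  have hterm : ∀ i ∈ Icc (m + 1) l, (i : ℝ) ^ q ≤ (l : ℝ) ^ q := fun i hi =>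
    Real.rpow_le_rpow i.cast_nonneg (Nat.cast_le.2 (mem_Icc.1 hi).2) hq
  have hcard : (#(Icc (m + 1) l) : ℝ) ≤ l := by
    rw [Nat.card_Icc]
    exact_mod_cast Nat.sub_le_of_le_add (by omega)
  calc ∑ i ∈ Icc (m + 1) l, (i : ℝ) ^ q
      ≤ #(Icc (m + 1) l) * (l : ℝ) ^ q := by
        simpa only [nsmul_eq_mul] using sum_le_card_nsmul _ _ _ hterm
    _ ≤ l * (l : ℝ) ^ q := by gcongr

/-- For `p ≥ 0`, `τ₀ ≥ 1` and all integers `l ≥ τ₀`: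
`l·⌊l/τ₀⌋^(2p) ≥ (2τ₀)^(-2p) ∑_{i=⌊l/τ₀⌋+1}^{l} i^(2p)`. -/
theorem floor_pow_tail_sum (p τ₀ : ℝ) (hp : 0 ≤ p) (hτ₀ : 1 ≤ τ₀)
    (l : ℕ) (hl : τ₀ ≤ (l : ℝ)) :
    (2 * τ₀) ^ (-(2 * p)) * ∑ i ∈ Finset.Icc (⌊(l : ℝ) / τ₀⌋₊ + 1) l, (i : ℝ) ^ (2 * p) ≤
      (l : ℝ) * ((⌊(l : ℝ) / τ₀⌋₊ : ℝ)) ^ (2 * p) := by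
  have hτ : 0 < τ₀ := by linarith
  have hq : 0 ≤ 2 * p := by linarith
  calc (2 * τ₀) ^ (-(2 * p)) * ∑ i ∈ Icc (⌊(l : ℝ) / τ₀⌋₊ + 1) l, (i : ℝ) ^ (2 * p)
      ≤ (2 * τ₀) ^ (-(2 * p)) * (l * (l : ℝ) ^ (2 * p)) := by
        gcongr
        exact sum_Icc_succ_rpow_le hq _ _
    _ = l * ((l : ℝ) / (2 * τ₀)) ^ (2 * p) := by
        rw [Real.div_rpow l.cast_nonneg (by positivity), Real.rpow_neg (by positivity)]
        ring
    _ ≤ l * ((⌊(l : ℝ) / τ₀⌋₊ : ℝ)) ^ (2 * p) := by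
        gcongr
        exact div_two_mul_le_floor_div hτ hl
end

section
/- For every γ > 0 and p ≥ 0, ∑_{n=1}^∞ e^{-γn} (∑_{i=1}^n i^{2p}) ≤ 4(8p+4)^{2p} / ((eγ)^{2p+1}(e^{γ/2}-1)). In particular the double series converges. -/
/-!
Bound the inner sum by `n ^ (2p+1)` and trade this power for half of the exponential decay,
using `e y ≤ exp y`, which gives `x ^ a ≤ (a / (e b)) ^ a * exp (b x)`. The series is then
dominated by `((4p+2)/(eγ)) ^ (2p+1) * ∑_{n ≥ 1} e^{-γn/2}`, and Bernoulli's inequality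
`2p+2 ≤ 2 ^ (2p+1)` turns the constant into the stated one.
-/

open Real Finset

lemma rpow_le_mul_exp {x a b : ℝ} (hx : 0 ≤ x) (ha : 0 < a) (hb : 0 < b) :
    x ^ a ≤ (a / (exp 1 * b)) ^ a * exp (b * x) :=
  calc x ^ a = (a / (exp 1 * b) * (exp 1 * (b * x / a))) ^ a := by
        congr 1; field_simp
    _ = (a / (exp 1 * b)) ^ a * (exp 1 * (b * x / a)) ^ a :=
        mul_rpow (by positivity) (by positivity)
    _ ≤ (a / (exp 1 * b)) ^ a * exp (b * x / a) ^ a := by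
        gcongr; exact exp_one_mul_le_exp
    _ = (a / (exp 1 * b)) ^ a * exp (b * x) := by
        rw [← exp_mul, div_mul_cancel₀ _ ha.ne']

lemma sum_Icc_rpow_le {s : ℝ} (hs : 0 ≤ s) (n : ℕ) :
    ∑ i ∈ Icc 1 n, (i : ℝ) ^ s ≤ (n : ℝ) ^ (s + 1) :=
  calc ∑ i ∈ Icc 1 n, (i : ℝ) ^ s ≤ ∑ _i ∈ Icc 1 n, (n : ℝ) ^ s :=
        sum_le_sum fun i hi => rpow_le_rpow i.cast_nonneg (Nat.cast_le.2 (mem_Icc.1 hi).2) hs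
    _ = (n : ℝ) ^ (s + 1) := by
        rw [sum_const, Nat.card_Icc, rpow_add_one' n.cast_nonneg (by positivity)]
        simp [mul_comm]

lemma summable_and_tsum_le_of_le_mul_exp_neg {f : ℕ → ℝ} {C c : ℝ} (hc : 0 < c)
    (hf_nonneg : ∀ n, 0 ≤ f n) (hf_zero : f 0 = 0) (hf : ∀ n : ℕ, f n ≤ C * exp (-c * n)) :
    Summable f ∧ ∑' n, f n ≤ C / (exp c - 1) := by
  have hexp : ∀ n : ℕ, exp (-c * n) = exp (-c) ^ n := fun n => by
    rw [← exp_nat_mul, mul_comm]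
  have hgeom : HasSum (fun n : ℕ => exp (-c) ^ n) (1 - exp (-c))⁻¹ :=
    hasSum_geometric_of_lt_one (exp_pos _).le (exp_lt_one_iff.2 (neg_neg_of_pos hc))
  have hsum : Summable f :=
    .of_nonneg_of_le hf_nonneg hf (by simpa only [hexp] using hgeom.summable.mul_left C)
  refine ⟨hsum, ?_⟩
  rw [hsum.tsum_eq_zero_add, hf_zero, zero_add]
  have hle : ∀ n : ℕ, f (n + 1) ≤ C * exp (-c) * exp (-c) ^ n := fun n => by
    simpa only [hexp, pow_succ', mul_assoc] using hf (n + 1)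
  calc ∑' n, f (n + 1) ≤ C * exp (-c) * (1 - exp (-c))⁻¹ :=
        hasSum_le hle ((summable_nat_add_iff 1).2 hsum).hasSum (hgeom.mul_left _)
    _ = C / (exp c - 1) := by
        have : exp c - 1 ≠ 0 := (sub_pos.2 (one_lt_exp_iff.2 hc)).ne'
        rw [exp_neg]
        field_simp

lemma four_mul_add_two_rpow_le {p : ℝ} (hp : 0 ≤ p) :
    (4 * p + 2) ^ (2 * p + 1) ≤ 4 * (8 * p + 4) ^ (2 * p) := by
  have hbernoulli : 2 * p + 2 ≤ (2 : ℝ) ^ (2 * p + 1) := by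
    convert one_add_mul_self_le_rpow_one_add (s := 1) (by norm_num) (p := 2 * p + 1)
      (by linarith) using 1 <;> ring_nf
  calc (4 * p + 2) ^ (2 * p + 1) = (4 * p + 2) ^ (2 * p) * (4 * p + 2) :=
        rpow_add_one (by positivity) _
    _ ≤ (4 * p + 2) ^ (2 * p) * (2 * 2 ^ (2 * p + 1)) := by gcongr; linarith
    _ = 4 * (2 * (4 * p + 2)) ^ (2 * p) := by
        rw [rpow_add_one two_ne_zero, mul_rpow zero_le_two (by positivity)]; ring
    _ = 4 * (8 * p + 4) ^ (2 * p) := by ring_nf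

/-- For every `γ > 0` and `p ≥ 0`, the series `∑_{n≥1} e^(-γn) (∑_{i=1}^n i^(2p))` converges and
is bounded by `4(8p+4)^(2p) / ((eγ)^(2p+1)(e^(γ/2)-1))`.  (The `n = 0` term is zero since the
inner sum is empty.) -/
theorem tsum_exp_mul_sum_rpow_le (γ p : ℝ) (hγ : 0 < γ) (hp : 0 ≤ p) :
    Summable (fun n : ℕ => Real.exp (-γ * n) * ∑ i ∈ Finset.Icc 1 n, (i : ℝ) ^ (2 * p)) ∧
    ∑' n : ℕ, Real.exp (-γ * n) * ∑ i ∈ Finset.Icc 1 n, (i : ℝ) ^ (2 * p) ≤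
      4 * (8 * p + 4) ^ (2 * p) /
        ((Real.exp 1 * γ) ^ (2 * p + 1) * (Real.exp (γ / 2) - 1)) := by
  have hbound : ∀ n : ℕ, exp (-γ * n) * ∑ i ∈ Icc 1 n, (i : ℝ) ^ (2 * p) ≤
      ((4 * p + 2) / (exp 1 * γ)) ^ (2 * p + 1) * exp (-(γ / 2) * n) := fun n =>
    calc exp (-γ * n) * ∑ i ∈ Icc 1 n, (i : ℝ) ^ (2 * p)
        ≤ exp (-γ * n) * (n : ℝ) ^ (2 * p + 1) := by
          gcongr; exact sum_Icc_rpow_le (by positivity) n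
      _ ≤ exp (-γ * n) * (((2 * p + 1) / (exp 1 * (γ / 2))) ^ (2 * p + 1) * exp (γ / 2 * n)) := by
          gcongr; exact rpow_le_mul_exp n.cast_nonneg (by positivity) (by positivity)
      _ = ((4 * p + 2) / (exp 1 * γ)) ^ (2 * p + 1) * exp (-(γ / 2) * n) := by
          rw [show (2 * p + 1) / (exp 1 * (γ / 2)) = (4 * p + 2) / (exp 1 * γ) by
            field_simp; ring, mul_left_comm, ← exp_add]
          ring_nf
  obtain ⟨hsum, hle⟩ := summable_and_tsum_le_of_le_mul_exp_neg (half_pos hγ)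
    (fun n => by positivity) (by simp) hbound
  refine ⟨hsum, hle.trans ?_⟩
  have : 0 < exp (γ / 2) - 1 := sub_pos.2 (one_lt_exp_iff.2 (half_pos hγ))
  rw [div_rpow (by positivity) (by positivity), div_div]
  gcongr
  exact four_mul_add_two_rpow_le hp
end
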